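/- arXiv:1211.2994 — 8 statements merged into one kernel-verified Lean document; each statement's English description precedes it below -/
import Mathlib

section
/- Every odd derivation D of the Z_2-graded algebra \hat{C}^\infty(M) is of the form D(f + g\tau) = g h for a unique smooth function h \in C^\infty(M). In particular, every odd derivation vanishes on the even subalgebra C^\infty(M), and is determined by its value D(\tau) = h. -/
/-!
We model the algebra of smooth functions `C^∞(M)` abstractly as a commutative `ℝ`-algebra `A`
(vector fields on `M` are then the `ℝ`-derivations of `A`).  The `ℤ₂`-graded algebra
`Ĉ^∞(M) = C^∞(M) ⊕ C^∞(M)τ` with `τ² = 1` is modelled as `A × A`, where `(f, g)`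
represents `f + g·τ`; the even part consists of pairs `(f, 0)` and the odd part of pairs
`(0, g)`, and `τ = (0, 1)`.
-/

variable {A : Type*} [CommRing A] [Algebra ℝ A]

/-- Multiplication of the graded algebra `A ⊕ Aτ`, `τ² = 1`:
`(f + gτ)(f' + g'τ) = (ff' + gg') + (fg' + gf')τ`. -/
def gmul (x y : A × A) : A × A := (x.1 * y.1 + x.2 * y.2, x.1 * y.2 + x.2 * y.1)

/-!
Multiplication by `τ` swaps the two components.  The even Leibniz rule applied to `g·τ` and the
odd one applied to `τ·(gτ)` express `D(gτ)` and `D(g)` through each other: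
`D(gτ) = τ·D(g) + g·D(τ)` and `τ·D(g) = g·D(τ) - D(gτ)`.  Hence `2·D(gτ) = 2g·D(τ)` and
`D(g) = 0`, so `D(f + gτ) = g·D(τ)`, where `D(τ) = h` is even.
-/

section GradedMul

variable {R : Type*} [CommRing R]

theorem gmul_comm (x y : R × R) : gmul x y = gmul y x := by
  simp only [gmul]
  congr 1 <;> ring

theorem gmul_even_left (f : R) (y : R × R) : gmul (f, 0) y = f • y := by
  simp [gmul, Prod.smul_def]

theorem gmul_odd_left (g : R) (y : R × R) : gmul (0, g) y = g • y.swap := by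
  simp [gmul, Prod.smul_def]

end GradedMul

structure IsOddLeibniz {R : Type*} [CommRing R] (D : R × R → R × R) : Prop where
  even : ∀ (f : R) (y : R × R), D (gmul (f, 0) y) = gmul (D (f, 0)) y + gmul (f, 0) (D y)
  odd : ∀ (g : R) (y : R × R), D (gmul (0, g) y) = gmul (D (0, g)) y - gmul (0, g) (D y)

namespace IsOddLeibniz

variable {R : Type*} [CommRing R] {D : R × R → R × R}

theorem apply_odd (hD : IsOddLeibniz D) (g : R) :
    D (0, g) = (D (g, 0)).swap + g • D (0, 1) := by
  simpa [gmul_even_left, gmul_comm _ ((0 : R), (1 : R)), gmul_odd_left] using hD.even g (0, 1)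

theorem apply_even (hD : IsOddLeibniz D) (g : R) :
    D (g, 0) = g • (D (0, 1)).swap - (D (0, g)).swap := by
  simpa [gmul_comm _ ((0 : R), g), gmul_odd_left] using hD.odd 1 (0, g)

variable [IsAddTorsionFree R]

theorem apply_odd_eq_smul (hD : IsOddLeibniz D) (g : R) : D (0, g) = g • D (0, 1) := by
  have hswap : (D (g, 0)).swap = g • D (0, 1) - D (0, g) := by
    rw [hD.apply_even, Prod.swap_sub, Prod.smul_swap, Prod.swap_swap, Prod.swap_swap]
  have hodd := hD.apply_odd g
  rw [hswap] at hodd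
  refine (nsmul_right_inj (two_ne_zero : (2 : ℕ) ≠ 0)).mp ?_
  rw [two_nsmul, two_nsmul]
  nth_rewrite 1 [hodd]
  abel

theorem apply_even_eq_zero (hD : IsOddLeibniz D) (f : R) : D (f, 0) = 0 := by
  have hswap : (D (f, 0)).swap + f • D (0, 1) = f • D (0, 1) := by
    rw [← hD.apply_odd, hD.apply_odd_eq_smul]
  rwa [add_eq_right, ← Prod.swap_zero, Prod.swap_inj] at hswap

end IsOddLeibniz

theorem odd_derivation_classification_general
    (D : (A × A) →ₗ[ℝ] (A × A))
    (hgrade_odd : ∀ g : A, (D (0, g)).2 = 0)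
    (hleibniz_even : ∀ (f : A) (y : A × A),
      D (gmul (f, 0) y) = gmul (D (f, 0)) y + gmul (f, 0) (D y))
    (hleibniz_odd : ∀ (g : A) (y : A × A),
      D (gmul (0, g) y) = gmul (D (0, g)) y - gmul (0, g) (D y)) :
    (∃! h : A, ∀ f g : A, D (f, g) = (g * h, 0)) ∧
    (∀ f : A, D (f, 0) = 0) ∧
    (∀ f g : A, D (f, g) = (g * (D (0, 1)).1, 0)) := by
  have : IsAddTorsionFree A := .of_isTorsionFree ℝ A
  have hD : IsOddLeibniz D := ⟨hleibniz_even, hleibniz_odd⟩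
  have hτ : D (0, 1) = ((D (0, 1)).1, 0) := Prod.ext rfl (hgrade_odd 1)
  have hD_apply : ∀ f g : A, D (f, g) = (g * (D (0, 1)).1, 0) := by
    intro f g
    have hsplit : ((f, g) : A × A) = (f, 0) + (0, g) := by simp
    rw [hsplit, map_add, hD.apply_even_eq_zero, hD.apply_odd_eq_smul, hτ]
    simp
  refine ⟨⟨_, hD_apply, fun h hh => ?_⟩, hD.apply_even_eq_zero, hD_apply⟩
  simpa using (congrArg Prod.fst (hh 0 1)).symm

/-- Every odd derivation `D` of `Ĉ^∞(M)` (an `ℝ`-linear map reversing the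
parity and satisfying the graded Leibniz rule on homogeneous elements) is of the form
`D(f + gτ) = g·h` for a unique `h ∈ C^∞(M)`.  In particular `D` vanishes on the even
subalgebra `C^∞(M)` and is determined by its value `h = D(τ)`. -/
theorem odd_derivation_classification
    (D : (A × A) →ₗ[ℝ] (A × A))
    (hgrade_even : ∀ f : A, (D (f, 0)).1 = 0)
    (hgrade_odd : ∀ g : A, (D (0, g)).2 = 0)
    (hleibniz_even : ∀ (f : A) (y : A × A),
      D (gmul (f, 0) y) = gmul (D (f, 0)) y + gmul (f, 0) (D y))
    (hleibniz_odd : ∀ (g : A) (y : A × A),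
      D (gmul (0, g) y) = gmul (D (0, g)) y - gmul (0, g) (D y)) :
    (∃! h : A, ∀ f g : A, D (f, g) = (g * h, 0)) ∧
    (∀ f : A, D (f, 0) = 0) ∧
    (∀ f g : A, D (f, g) = (g * (D (0, 1)).1, 0)) :=
  odd_derivation_classification_general D hgrade_odd hleibniz_even hleibniz_odd
end

section
/- Every graded connection \hat{\nabla} on the graded tangent bundle \hat{T}M = TM \oplus R is uniquely determined by a quadruple (\nabla, \alpha, \alpha', X_0), where \nabla is a connection on M, \alpha, \alpha' are 1-forms, and X_0 is a vector field on M, via: \hat{\nabla}_X Y = \nabla_X Y, \hat{\nabla}_{h\xi} X = h\alpha(X)\xi, \hat{\nabla}_X h\xi = h\alpha'(X)\xi + X(h)\xi, and \hat{\nabla}_{h\xi} k\xi = hk X_0. -/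
open scoped BigOperators

/-!
We model the algebra of smooth functions `C^∞(M)` abstractly as a commutative `ℝ`-algebra `A`;
vector fields on `M` are the `ℝ`-derivations `Vec A := Derivation ℝ A A`.  A semi-Riemannian
metric together with its Levi-Civita connection is encoded by the structure `SRData`
(symmetric nondegenerate-in-use `A`-bilinear form, plus a torsion-free metric-compatible
connection).  Traces are taken with respect to a (local) orthonormal frame `OrthoFrame`.
-/

variable (A : Type*) [CommRing A] [Algebra ℝ A]

/-- Vector fields: derivations of the function algebra. -/
abbrev Vec := Derivation ℝ A A

/-- A semi-Riemannian metric `g` together with its Levi-Civita connection `∇` on the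
module of vector fields: `g` is `A`-bilinear and symmetric, `∇` is a connection which is
torsion free and metric compatible. -/
structure SRData where
  g : Vec A → Vec A → A
  g_add_left : ∀ X Y Z, g (X + Y) Z = g X Z + g Y Z
  g_smul_left : ∀ (f : A) (X Y), g (f • X) Y = f * g X Y
  g_symm : ∀ X Y, g X Y = g Y X
  conn : Vec A → Vec A → Vec A
  conn_add_left : ∀ X Y Z, conn (X + Y) Z = conn X Z + conn Y Z
  conn_add_right : ∀ X Y Z, conn X (Y + Z) = conn X Y + conn X Z
  conn_smul_left : ∀ (f : A) (X Y), conn (f • X) Y = f • conn X Y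
  conn_leibniz : ∀ (X) (f : A) (Y), conn X (f • Y) = X f • Y + f • conn X Y
  torsion_free : ∀ X Y, conn X Y - conn Y X = ⁅X, Y⁆
  metric_compat : ∀ X Y Z, X (g Y Z) = g (conn X Y) Z + g Y (conn X Z)

variable {A}

/-- The Hessian `Hes(f)(X, Y) = (∇_X df)(Y) = X(Y f) - (∇_X Y) f`. -/
def SRData.hess (S : SRData A) (f : A) (X Y : Vec A) : A := X (Y f) - (S.conn X Y) f

/-- The curvature tensor `R(X, Y)Z = ∇_X ∇_Y Z - ∇_Y ∇_X Z - ∇_[X,Y] Z`. -/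
def SRData.curv (S : SRData A) (X Y Z : Vec A) : Vec A :=
  S.conn X (S.conn Y Z) - S.conn Y (S.conn X Z) - S.conn ⁅X, Y⁆ Z

/-- A (local) orthonormal frame `E₁, …, E_n` with signs `ε_i = g(E_i, E_i) = ±1`,
together with the expansion `X = ∑ ε_i g(X, E_i) E_i`. -/
structure OrthoFrame (S : SRData A) (n : ℕ) where
  E : Fin n → Vec A
  eps : Fin n → A
  eps_sq : ∀ i, eps i * eps i = 1
  ortho : ∀ i j, S.g (E i) (E j) = if i = j then eps i else 0
  expand : ∀ X : Vec A, X = ∑ i, (eps i * S.g X (E i)) • E i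

/-- The Laplacian `Δf = tr_g Hes(f) = ∑ ε_i Hes(f)(E_i, E_i)`. -/
def SRData.lap (S : SRData A) {n : ℕ} (F : OrthoFrame S n) (f : A) : A :=
  ∑ i, F.eps i * S.hess f (F.E i) (F.E i)

/-- The Ricci curvature `Ric(X, Y) = ∑ ε_i ⟨R(X, E_i)E_i, Y⟩`. -/
def SRData.ric (S : SRData A) {n : ℕ} (F : OrthoFrame S n) (X Y : Vec A) : A :=
  ∑ i, F.eps i * S.g (S.curv X (F.E i) (F.E i)) Y

/-- The scalar curvature `R = ∑ ε_i Ric(E_i, E_i)`. -/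
def SRData.scal (S : SRData A) {n : ℕ} (F : OrthoFrame S n) : A :=
  ∑ i, F.eps i * S.ric F (F.E i) (F.E i)

/-- The divergence of a `2`-covariant tensor:
`div(T)(X) = ∑ ε_i (∇_{E_i} T)(E_i, X)`. -/
def SRData.div2 (S : SRData A) {n : ℕ} (F : OrthoFrame S n)
    (T : Vec A → Vec A → A) (X : Vec A) : A :=
  ∑ i, F.eps i *
    (F.E i (T (F.E i) X) - T (S.conn (F.E i) (F.E i)) X - T (F.E i) (S.conn (F.E i) X))

/-!
The graded tangent bundle `T̂M = TM ⊕ ℝ`: its sections `𝔛̂(M) = 𝔛(M) ⊕ C^∞(M)ξ` are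
encoded as pairs `(X, h)` representing `X + hξ`, with even part `(X, 0)` and odd part
`(0, h)`.  The Lie algebroid structure has anchor `ρ(X + hξ) = X` and brackets
`[X, hξ] = X(h)ξ`, `[fξ, gξ] = 0`.
-/

variable (A)

/-- Sections of the graded tangent bundle: pairs `(X, h)` representing `X + hξ`. -/
abbrev GVec := Vec A × A

variable {A}

/-- Multiplication of a graded vector field by a function: `f • (X + hξ) = fX + (fh)ξ`. -/
def gsmul (f : A) (p : GVec A) : GVec A := (f • p.1, f * p.2)

/-- The algebroid bracket: `[X + hξ, Y + kξ] = [X, Y] + (X(k) - Y(h))ξ`. -/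
def gbracket (p q : GVec A) : GVec A := (⁅p.1, q.1⁆, p.1 q.2 - q.1 p.2)

variable (A)

/-- A connection on the Lie algebroid `T̂M`:  `C^∞(M)`-linear in the lower variable and a
Leibniz rule via the anchor `ρ(X + hξ) = X` in the upper variable. -/
structure GConn where
  conn : GVec A → GVec A → GVec A
  add_left : ∀ p q r, conn (p + q) r = conn p r + conn q r
  add_right : ∀ p q r, conn p (q + r) = conn p q + conn p r
  smul_left : ∀ (f : A) (p q), conn (gsmul f p) q = gsmul f (conn p q)
  leibniz : ∀ (p) (f : A) (q), conn p (gsmul f q) = gsmul (p.1 f) q + gsmul f (conn p q)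

variable {A}

/-- A connection on `T̂M` is graded when `∇̂_X̂ Ŷ` is homogeneous of parity
`|X̂| + |Ŷ|` for homogeneous `X̂, Ŷ`. -/
def GConn.IsGraded (D : GConn A) : Prop :=
  (∀ X Y : Vec A, (D.conn (X, (0 : A)) (Y, (0 : A))).2 = 0) ∧
  (∀ (X : Vec A) (h : A), (D.conn (X, (0 : A)) ((0 : Vec A), h)).1 = 0) ∧
  (∀ (h : A) (Y : Vec A), (D.conn ((0 : Vec A), h) (Y, (0 : A))).1 = 0) ∧
  (∀ h k : A, (D.conn ((0 : Vec A), h) ((0 : Vec A), k)).2 = 0)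

/-- The curvature of a connection on `T̂M`. -/
def GConn.curv (D : GConn A) (p q r : GVec A) : GVec A :=
  D.conn p (D.conn q r) - D.conn q (D.conn p r) - D.conn (gbracket p q) r

/-- The graded metric `ĝ = (g, θ)` on `T̂M`, with even and odd parts orthogonal,
`⟨X, Y⟩ = g(X, Y)` and `⟨ξ, ξ⟩ = e^{2θ}` (the element `Eexp` below plays the role of
`e^{2θ}`). -/
def gmetric (S : SRData A) (Eexp : A) (p q : GVec A) : A :=
  S.g p.1 q.1 + p.2 * q.2 * Eexp

/-- The Ricci curvature of the graded metric, i.e. the trace of the curvature of `D` over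
the orthonormal frame `{E₁, …, E_n, e^{-θ}ξ}` of `T̂M`; `Einv` plays the role of
`e^{-2θ}`. -/
def gric (S : SRData A) {n : ℕ} (F : OrthoFrame S n) (D : GConn A) (Eexp Einv : A)
    (p q : GVec A) : A :=
  (∑ i, F.eps i * gmetric S Eexp (D.curv p (F.E i, (0 : A)) (F.E i, (0 : A))) q)
    + Einv * gmetric S Eexp (D.curv p ((0 : Vec A), (1 : A)) ((0 : Vec A), (1 : A))) q

/-- The scalar curvature of the graded metric: the `ĝ`-trace of `gric`. -/
def gscal (S : SRData A) {n : ℕ} (F : OrthoFrame S n) (D : GConn A) (Eexp Einv : A) : A :=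
  (∑ i, F.eps i * gric S F D Eexp Einv (F.E i, (0 : A)) (F.E i, (0 : A)))
    + Einv * gric S F D Eexp Einv ((0 : Vec A), (1 : A)) ((0 : Vec A), (1 : A))

/-- The graded Hessian `Ĥes(f)(X̂, Ŷ) = (∇̂_X̂ d̂f)(Ŷ) = ρ(X̂)(d̂f(Ŷ)) - d̂f(∇̂_X̂ Ŷ)`,
where `d̂f(X + hξ) = X(f)`. -/
def ghess (D : GConn A) (f : A) (p q : GVec A) : A :=
  p.1 (q.1 f) - (D.conn p q).1 f

/-!
`C^∞(M)`-linearity in the lower slot and the Leibniz rule in the upper slot reduce `∇̂` on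
odd sections `hξ` to `∇̂_ξ` and `∇̂_· ξ`, and gradedness kills the components of the wrong
parity. What remains are `∇̂_X Y`, the `ξ`-components of `∇̂_ξ X` and `∇̂_X ξ`, and `∇̂_ξ ξ`,
which are `∇`, `α`, `α'` and `X₀`.
-/

theorem gsmul_zero_one (h : A) : gsmul h ((0 : Vec A), (1 : A)) = (0, h) := by
  simp [gsmul]

theorem gsmul_mk_zero (f : A) (X : Vec A) : gsmul f (X, (0 : A)) = (f • X, 0) := by
  simp [gsmul]

theorem mk_add_mk_zero (X Y : Vec A) : ((X, 0) + (Y, 0) : GVec A) = (X + Y, 0) := by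
  simp

namespace GConn

variable (D : GConn A)

def baseConn (X Y : Vec A) : Vec A := (D.conn (X, 0) (Y, 0)).1

def alpha (X : Vec A) : A := (D.conn (0, 1) (X, 0)).2

def alpha' (X : Vec A) : A := (D.conn (X, 0) (0, 1)).2

def X₀ : Vec A := (D.conn (0, 1) (0, 1)).1

theorem baseConn_add_left (X Y Z : Vec A) :
    D.baseConn (X + Y) Z = D.baseConn X Z + D.baseConn Y Z := by
  simp only [baseConn, ← mk_add_mk_zero, D.add_left, Prod.fst_add]

theorem baseConn_add_right (X Y Z : Vec A) :
    D.baseConn X (Y + Z) = D.baseConn X Y + D.baseConn X Z := by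
  simp only [baseConn, ← mk_add_mk_zero, D.add_right, Prod.fst_add]

theorem baseConn_smul_left (f : A) (X Y : Vec A) :
    D.baseConn (f • X) Y = f • D.baseConn X Y := by
  rw [baseConn, ← gsmul_mk_zero, D.smul_left]
  rfl

theorem baseConn_leibniz (X : Vec A) (f : A) (Y : Vec A) :
    D.baseConn X (f • Y) = X f • Y + f • D.baseConn X Y := by
  rw [baseConn, ← gsmul_mk_zero, D.leibniz]
  rfl

theorem alpha_add (X Y : Vec A) : D.alpha (X + Y) = D.alpha X + D.alpha Y := by
  simp only [alpha, ← mk_add_mk_zero, D.add_right, Prod.snd_add]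

theorem alpha_smul (f : A) (X : Vec A) : D.alpha (f • X) = f * D.alpha X := by
  rw [alpha, ← gsmul_mk_zero, D.leibniz]
  simp [gsmul, alpha]

theorem alpha'_add (X Y : Vec A) : D.alpha' (X + Y) = D.alpha' X + D.alpha' Y := by
  simp only [alpha', ← mk_add_mk_zero, D.add_left, Prod.snd_add]

theorem alpha'_smul (f : A) (X : Vec A) : D.alpha' (f • X) = f * D.alpha' X := by
  rw [alpha', ← gsmul_mk_zero, D.smul_left]
  rfl

namespace IsGraded

variable {D}

theorem conn_even_even (hD : D.IsGraded) (X Y : Vec A) :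
    D.conn (X, 0) (Y, 0) = (D.baseConn X Y, 0) :=
  Prod.ext rfl (hD.1 X Y)

theorem conn_odd_even (hD : D.IsGraded) (h : A) (X : Vec A) :
    D.conn (0, h) (X, 0) = (0, h * D.alpha X) := by
  rw [← gsmul_zero_one, D.smul_left]
  simp [gsmul, alpha, hD.2.2.1 1 X]

theorem conn_even_odd (hD : D.IsGraded) (X : Vec A) (h : A) :
    D.conn (X, 0) (0, h) = (0, h * D.alpha' X + X h) := by
  rw [← gsmul_zero_one, D.leibniz]
  simp [gsmul, alpha', hD.2.1 X 1, add_comm]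

theorem conn_odd_odd (hD : D.IsGraded) (h k : A) :
    D.conn (0, h) (0, k) = ((h * k) • D.X₀, 0) := by
  rw [← gsmul_zero_one h, D.smul_left, ← gsmul_zero_one k, D.leibniz]
  simp [gsmul, X₀, hD.2.2.2 1 1, smul_smul]

end IsGraded

theorem eq_components_of_conn_eq {nabla : Vec A → Vec A → Vec A} {α α' : Vec A → A}
    {Y₀ : Vec A}
    (hee : ∀ X Y : Vec A, D.conn (X, 0) (Y, 0) = (nabla X Y, 0))
    (hoe : ∀ (h : A) (X : Vec A), D.conn (0, h) (X, 0) = (0, h * α X))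
    (heo : ∀ (X : Vec A) (h : A), D.conn (X, 0) (0, h) = (0, h * α' X + X h))
    (hoo : ∀ h k : A, D.conn (0, h) (0, k) = ((h * k) • Y₀, 0)) :
    (nabla, α, α', Y₀) = (D.baseConn, D.alpha, D.alpha', D.X₀) := by
  ext <;> simp [baseConn, alpha, alpha', X₀, hee, hoe, heo, hoo]

end GConn

/-- Every graded connection `∇̂` on `T̂M = TM ⊕ ℝ` is uniquely
determined by a quadruple `(∇, α, α', X₀)` — a connection `∇` on `M`, two 1-forms
`α, α'`, and a vector field `X₀` — via
`∇̂_X Y = ∇_X Y`, `∇̂_{hξ} X = h α(X) ξ`, `∇̂_X (hξ) = (h α'(X) + X(h)) ξ`, and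
`∇̂_{hξ} (kξ) = hk X₀`. -/
theorem graded_connection_classification
    {A : Type*} [CommRing A] [Algebra ℝ A] (D : GConn A) (hD : D.IsGraded) :
    ∃! q : (Vec A → Vec A → Vec A) × (Vec A → A) × (Vec A → A) × Vec A,
      (∀ X Y Z : Vec A, q.1 (X + Y) Z = q.1 X Z + q.1 Y Z) ∧
      (∀ X Y Z : Vec A, q.1 X (Y + Z) = q.1 X Y + q.1 X Z) ∧
      (∀ (f : A) (X Y : Vec A), q.1 (f • X) Y = f • q.1 X Y) ∧
      (∀ (X : Vec A) (f : A) (Y : Vec A), q.1 X (f • Y) = X f • Y + f • q.1 X Y) ∧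
      (∀ X Y : Vec A, q.2.1 (X + Y) = q.2.1 X + q.2.1 Y) ∧
      (∀ (f : A) (X : Vec A), q.2.1 (f • X) = f * q.2.1 X) ∧
      (∀ X Y : Vec A, q.2.2.1 (X + Y) = q.2.2.1 X + q.2.2.1 Y) ∧
      (∀ (f : A) (X : Vec A), q.2.2.1 (f • X) = f * q.2.2.1 X) ∧
      (∀ X Y : Vec A, D.conn (X, (0 : A)) (Y, (0 : A)) = (q.1 X Y, 0)) ∧
      (∀ (h : A) (X : Vec A),
        D.conn ((0 : Vec A), h) (X, (0 : A)) = (0, h * q.2.1 X)) ∧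
      (∀ (X : Vec A) (h : A),
        D.conn (X, (0 : A)) ((0 : Vec A), h) = (0, h * q.2.2.1 X + X h)) ∧
      (∀ h k : A,
        D.conn ((0 : Vec A), h) ((0 : Vec A), k) = ((h * k) • q.2.2.2, 0)) := by
  refine ⟨(D.baseConn, D.alpha, D.alpha', D.X₀),
    ⟨D.baseConn_add_left, D.baseConn_add_right, D.baseConn_smul_left, D.baseConn_leibniz,
      D.alpha_add, D.alpha_smul, D.alpha'_add, D.alpha'_smul,
      hD.conn_even_even, hD.conn_odd_even, hD.conn_even_odd, hD.conn_odd_odd⟩, ?_⟩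
  rintro ⟨nabla, α, α', X₀⟩ ⟨-, -, -, -, -, -, -, -, hee, hoe, heo, hoo⟩
  exact D.eq_components_of_conn_eq hee hoe heo hoo
end

section
/- A graded connection \hat{\nabla} on \hat{T}M determined by the quadruple (\nabla, \alpha, \alpha', X_0) is torsion free if and only if \nabla is torsion free and \alpha = \alpha'. -/
open scoped BigOperators

/-!
We model the algebra of smooth functions `C^∞(M)` abstractly as a commutative `ℝ`-algebra `A`;
vector fields on `M` are the `ℝ`-derivations `Vec A := Derivation ℝ A A`.  A semi-Riemannian
metric together with its Levi-Civita connection is encoded by the structure `SRData`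
(symmetric nondegenerate-in-use `A`-bilinear form, plus a torsion-free metric-compatible
connection).  Traces are taken with respect to a (local) orthonormal frame `OrthoFrame`.
-/

variable (A : Type*) [CommRing A] [Algebra ℝ A]

variable {A}

/-!
The graded tangent bundle `T̂M = TM ⊕ ℝ`: its sections `𝔛̂(M) = 𝔛(M) ⊕ C^∞(M)ξ` are
encoded as pairs `(X, h)` representing `X + hξ`, with even part `(X, 0)` and odd part
`(0, h)`.  The Lie algebroid structure has anchor `ρ(X + hξ) = X` and brackets
`[X, hξ] = X(h)ξ`, `[fξ, gξ] = 0`.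
-/

variable (A)

variable {A}

variable (A)

variable {A}

/-- The torsion of a connection on `T̂M`:
`T̂(X̂, Ŷ) = ∇̂_X̂ Ŷ - ∇̂_Ŷ X̂ - [X̂, Ŷ]`. -/
def GConn.torsion {A : Type*} [CommRing A] [Algebra ℝ A] (D : GConn A) (p q : GVec A) :
    GVec A :=
  D.conn p q - D.conn q p - gbracket p q

/-! Torsion is biadditive and antisymmetric, because the connection and the bracket are, so it
vanishes once it vanishes on homogeneous pairs. There the data `(∇, α, α', X₀)` compute it: on two
even sections it is the torsion of `∇`, on `(X, hξ)` it is `h (α' - α)(X) ξ`, and on two odd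
sections it vanishes since `hk X₀` is symmetric in `h, k`. -/

namespace GConn

variable (D : GConn A)

theorem torsion_add_left (p q r : GVec A) :
    D.torsion (p + q) r = D.torsion p r + D.torsion q r := by
  simp only [torsion, gbracket, D.add_left, D.add_right]
  refine Prod.ext ?_ ?_
  · simp only [Prod.fst_sub, Prod.fst_add, add_lie]
    abel
  · simp only [Prod.snd_sub, Prod.snd_add, Prod.fst_add, Derivation.add_apply, map_add]
    ring

theorem torsion_swap (p q : GVec A) : D.torsion q p = -D.torsion p q := by
  simp only [torsion, gbracket]
  refine Prod.ext ?_ ?_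
  · simp only [Prod.fst_sub, Prod.fst_neg, ← lie_skew p.1 q.1]
    abel
  · simp only [Prod.snd_sub, Prod.snd_neg]
    ring

theorem torsion_add_right (p q r : GVec A) :
    D.torsion p (q + r) = D.torsion p q + D.torsion p r := by
  rw [torsion_swap, torsion_add_left, neg_add, ← torsion_swap, ← torsion_swap]

theorem torsion_eq_zero_iff_homogeneous :
    (∀ p q : GVec A, D.torsion p q = 0) ↔
      (∀ X Y : Vec A, D.torsion (X, 0) (Y, 0) = 0) ∧
      (∀ (X : Vec A) (h : A), D.torsion (X, 0) (0, h) = 0) ∧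
      (∀ h k : A, D.torsion (0, h) (0, k) = 0) := by
  refine ⟨fun H => ⟨fun _ _ => H _ _, fun _ _ => H _ _, fun _ _ => H _ _⟩, ?_⟩
  rintro ⟨heven, hmixed, hodd⟩ ⟨X, h⟩ ⟨Y, k⟩
  have hsplit : ∀ (Z : Vec A) (f : A), ((Z, f) : GVec A) = (Z, 0) + (0, f) := by simp
  rw [hsplit X, hsplit Y, torsion_add_left, torsion_add_right, torsion_add_right,
    torsion_swap D (Y, 0) (0, h), heven, hmixed, hmixed, hodd]
  simp

theorem torsion_even_even {nabla : Vec A → Vec A → Vec A}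
    (h1 : ∀ X Y : Vec A, D.conn (X, (0 : A)) (Y, (0 : A)) = (nabla X Y, 0)) (X Y : Vec A) :
    D.torsion (X, 0) (Y, 0) = (nabla X Y - nabla Y X - ⁅X, Y⁆, 0) := by
  simp [torsion, gbracket, h1]

theorem torsion_even_odd {α α' : Vec A → A}
    (h2 : ∀ (h : A) (X : Vec A), D.conn ((0 : Vec A), h) (X, (0 : A)) = (0, h * α X))
    (h3 : ∀ (X : Vec A) (h : A),
      D.conn (X, (0 : A)) ((0 : Vec A), h) = (0, h * α' X + X h)) (X : Vec A) (h : A) :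
    D.torsion (X, 0) (0, h) = (0, h * (α' X - α X)) := by
  simp only [torsion, gbracket, h2, h3]
  refine Prod.ext ?_ ?_
  · simp
  · simp only [Prod.snd_sub, map_zero, sub_zero]
    ring

theorem torsion_odd_odd {X₀ : Vec A}
    (h4 : ∀ h k : A, D.conn ((0 : Vec A), h) ((0 : Vec A), k) = ((h * k) • X₀, 0))
    (h k : A) : D.torsion (0, h) (0, k) = 0 := by
  simp [torsion, gbracket, h4, mul_comm h k]

end GConn

/-- A graded connection `∇̂` on `T̂M` determined by the quadruple
`(∇, α, α', X₀)` is torsion free if and only if `∇` is torsion free and `α = α'`. -/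
theorem graded_connection_torsion_free_iff
    {A : Type*} [CommRing A] [Algebra ℝ A] (D : GConn A)
    (nabla : Vec A → Vec A → Vec A) (α α' : Vec A → A) (X₀ : Vec A)
    (h1 : ∀ X Y : Vec A, D.conn (X, (0 : A)) (Y, (0 : A)) = (nabla X Y, 0))
    (h2 : ∀ (h : A) (X : Vec A), D.conn ((0 : Vec A), h) (X, (0 : A)) = (0, h * α X))
    (h3 : ∀ (X : Vec A) (h : A),
      D.conn (X, (0 : A)) ((0 : Vec A), h) = (0, h * α' X + X h))
    (h4 : ∀ h k : A, D.conn ((0 : Vec A), h) ((0 : Vec A), k) = ((h * k) • X₀, 0)) :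
    (∀ p q : GVec A, D.torsion p q = 0) ↔
      ((∀ X Y : Vec A, nabla X Y - nabla Y X = ⁅X, Y⁆) ∧ α = α') := by
  have hmixed : (∀ (X : Vec A) (h : A), h * (α' X - α X) = 0) ↔ α = α' := by
    refine ⟨fun H => funext fun X => ?_, fun H X h => by rw [H, sub_self, mul_zero]⟩
    simpa [sub_eq_zero, eq_comm] using H X 1
  simp only [D.torsion_eq_zero_iff_homogeneous, D.torsion_even_even h1,
    D.torsion_even_odd h2 h3, D.torsion_odd_odd h4, Prod.mk_eq_zero, sub_eq_zero,
    true_and, and_true, implies_true, ← hmixed]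
end

section
/- The Levi-Civita connection of a graded metric on \hat{T}M (the unique torsion-free metric-compatible connection given by the Koszul formula) is a graded connection: for homogeneous sections \hat{X}, \hat{Y}, the section \hat{\nabla}_{\hat{X}}\hat{Y} is homogeneous of parity |\hat{X}| + |\hat{Y}|. -/
open scoped BigOperators

/-!
We model the algebra of smooth functions `C^∞(M)` abstractly as a commutative `ℝ`-algebra `A`;
vector fields on `M` are the `ℝ`-derivations `Vec A := Derivation ℝ A A`.  A semi-Riemannian
metric together with its Levi-Civita connection is encoded by the structure `SRData`
(symmetric nondegenerate-in-use `A`-bilinear form, plus a torsion-free metric-compatible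
connection).  Traces are taken with respect to a (local) orthonormal frame `OrthoFrame`.
-/

variable (A : Type*) [CommRing A] [Algebra ℝ A]

variable {A}

/-!
The graded tangent bundle `T̂M = TM ⊕ ℝ`: its sections `𝔛̂(M) = 𝔛(M) ⊕ C^∞(M)ξ` are
encoded as pairs `(X, h)` representing `X + hξ`, with even part `(X, 0)` and odd part
`(0, h)`.  The Lie algebroid structure has anchor `ρ(X + hξ) = X` and brackets
`[X, hξ] = X(h)ξ`, `[fξ, gξ] = 0`.
-/

variable (A)

variable {A}

variable (A)

variable {A}

/-!
In the Koszul formula for `2 ⟨∇̂_p q, r⟩` with `p, q, r` homogeneous of odd total parity every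
term vanishes: the anchor kills odd sections, the algebroid bracket is graded, and `B` pairs
sections of different parity to zero. Hence `∇̂_p q` is `B`-orthogonal to every section of parity
`|p| + |q| + 1`; since the two parities are `B`-orthogonal and `B` is nondegenerate, `∇̂_p q` has
parity `|p| + |q|`.
-/

theorem eq_zero_of_two_mul_eq_zero {a : A} (h : 2 * a = 0) : a = 0 := by
  have h2 := (IsUnit.mk0 (2 : ℝ) two_ne_zero).map (algebraMap ℝ A)
  rw [map_ofNat] at h2
  exact h2.mul_right_eq_zero.mp h

theorem ZMod.eq_zero_or_eq_one (a : ZMod 2) : a = 0 ∨ a = 1 := by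
  revert a; decide

theorem ZMod.add_ne_of_add_add_eq_one {a b c : ZMod 2} (h : a + b + c = 1) : a + b ≠ c := by
  revert a b c; decide

theorem GVec.even_add_odd (p : GVec A) : ((p.1, 0) + (0, p.2) : GVec A) = p :=
  Prod.ext (add_zero _) (zero_add _)

/-- Parity `0` is even (no `ξ`-component), parity `1` is odd (no vector-field component). -/
def GVec.IsHomogeneous (ε : ZMod 2) (p : GVec A) : Prop :=
  if ε = 0 then p.2 = 0 else p.1 = 0

namespace GVec

@[simp]
theorem isHomogeneous_zero {p : GVec A} : IsHomogeneous 0 p ↔ p.2 = 0 := Iff.rfl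

@[simp]
theorem isHomogeneous_one {p : GVec A} : IsHomogeneous 1 p ↔ p.1 = 0 := Iff.rfl

theorem isHomogeneous_gbracket {a b : ZMod 2} {p q : GVec A} (hp : IsHomogeneous a p)
    (hq : IsHomogeneous b q) : IsHomogeneous (a + b) (gbracket p q) := by
  obtain ⟨X, h⟩ := p
  obtain ⟨Y, k⟩ := q
  rcases a.eq_zero_or_eq_one with rfl | rfl <;> rcases b.eq_zero_or_eq_one with rfl | rfl <;>
    simp_all [gbracket, CharTwo.add_self_eq_zero]

end GVec

open GVec

structure IsGradedPairing (B : GVec A → GVec A → A) : Prop where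
  add_left : ∀ p q r, B (p + q) r = B p r + B q r
  symm : ∀ p q, B p q = B q p
  even_orth_odd : ∀ (X : Vec A) (h : A), B (X, 0) (0, h) = 0
  nondeg : ∀ p, (∀ q, B p q = 0) → p = 0

/-- The right-hand side of the Koszul formula for `2 ⟨∇̂_p q, r⟩`. -/
def koszul (B : GVec A → GVec A → A) (p q r : GVec A) : A :=
  p.1 (B q r) + q.1 (B r p) - r.1 (B p q)
    + B (gbracket p q) r - B (gbracket q r) p + B (gbracket r p) q

namespace IsGradedPairing

variable {B : GVec A → GVec A → A} (hB : IsGradedPairing B)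
include hB

theorem add_right (p q r : GVec A) : B p (q + r) = B p q + B p r := by
  rw [hB.symm, hB.add_left, hB.symm q, hB.symm r]

theorem odd_orth_even (h : A) (X : Vec A) : B (0, h) (X, 0) = 0 := by
  rw [hB.symm, hB.even_orth_odd]

theorem eq_zero_of_parity_ne {a b : ZMod 2} {p q : GVec A} (hp : IsHomogeneous a p)
    (hq : IsHomogeneous b q) (hab : a ≠ b) : B p q = 0 := by
  obtain ⟨X, h⟩ := p
  obtain ⟨Y, k⟩ := q
  rcases a.eq_zero_or_eq_one with rfl | rfl <;> rcases b.eq_zero_or_eq_one with rfl | rfl <;>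
    simp_all [hB.even_orth_odd, hB.odd_orth_even]

theorem eq_zero_of_forall_even_odd {u : GVec A} (heven : ∀ X : Vec A, B u (X, 0) = 0)
    (hodd : ∀ h : A, B u (0, h) = 0) : u = 0 :=
  hB.nondeg u fun q => by rw [← q.even_add_odd, hB.add_right, heven, hodd, add_zero]

theorem isHomogeneous_of_forall {ε : ZMod 2} {v : GVec A}
    (hv : ∀ r, IsHomogeneous (ε + 1) r → B v r = 0) : IsHomogeneous ε v := by
  rcases ε.eq_zero_or_eq_one with rfl | rfl
  · have hodd : ((0 : Vec A), v.2) = 0 := hB.eq_zero_of_forall_even_odd (hB.odd_orth_even v.2)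
      fun h => by
        have := hv (0, h) (by simp)
        rwa [← v.even_add_odd, hB.add_left, hB.even_orth_odd, zero_add] at this
    exact congrArg Prod.snd hodd
  · have heven : (v.1, (0 : A)) = 0 := hB.eq_zero_of_forall_even_odd
      (fun X => by
        have := hv (X, 0) (by simp [CharTwo.add_self_eq_zero])
        rwa [← v.even_add_odd, hB.add_left, hB.odd_orth_even, add_zero] at this)
      (hB.even_orth_odd v.1)
    exact congrArg Prod.fst heven

theorem anchor_apply_eq_zero {a b c : ZMod 2} {p q r : GVec A} (hp : IsHomogeneous a p)
    (hq : IsHomogeneous b q) (hr : IsHomogeneous c r) (habc : a + b + c = 1) :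
    p.1 (B q r) = 0 := by
  rcases a.eq_zero_or_eq_one with rfl | rfl
  · rw [hB.eq_zero_of_parity_ne hq hr (by simpa using ZMod.add_ne_of_add_add_eq_one habc),
      map_zero]
  · rw [isHomogeneous_one.mp hp, Derivation.zero_apply]

theorem gbracket_apply_eq_zero {a b c : ZMod 2} {p q r : GVec A} (hp : IsHomogeneous a p)
    (hq : IsHomogeneous b q) (hr : IsHomogeneous c r) (habc : a + b + c = 1) :
    B (gbracket p q) r = 0 :=
  hB.eq_zero_of_parity_ne (isHomogeneous_gbracket hp hq) hr (ZMod.add_ne_of_add_add_eq_one habc)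

theorem koszul_eq_zero {a b c : ZMod 2} {p q r : GVec A} (hp : IsHomogeneous a p)
    (hq : IsHomogeneous b q) (hr : IsHomogeneous c r) (habc : a + b + c = 1) :
    koszul B p q r = 0 := by
  have hbca : b + c + a = 1 := by linear_combination habc
  have hcab : c + a + b = 1 := by linear_combination habc
  rw [koszul, hB.anchor_apply_eq_zero hp hq hr habc, hB.anchor_apply_eq_zero hq hr hp hbca,
    hB.anchor_apply_eq_zero hr hp hq hcab, hB.gbracket_apply_eq_zero hp hq hr habc,
    hB.gbracket_apply_eq_zero hq hr hp hbca, hB.gbracket_apply_eq_zero hr hp hq hcab]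
  simp

theorem isHomogeneous_conn (D : GConn A)
    (hkoszul : ∀ p q r, 2 * B (D.conn p q) r = koszul B p q r) {a b : ZMod 2} {p q : GVec A}
    (hp : IsHomogeneous a p) (hq : IsHomogeneous b q) : IsHomogeneous (a + b) (D.conn p q) :=
  hB.isHomogeneous_of_forall fun r hr => eq_zero_of_two_mul_eq_zero <|
    (hkoszul p q r).trans <| hB.koszul_eq_zero hp hq hr <| by
      rw [← add_assoc, CharTwo.add_self_eq_zero, zero_add]

end IsGradedPairing

theorem levi_civita_of_graded_metric_is_graded_general
    {A : Type*} [CommRing A] [Algebra ℝ A]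
    (B : GVec A → GVec A → A)
    (hadd : ∀ p q r : GVec A, B (p + q) r = B p r + B q r)
    (hsymm : ∀ p q : GVec A, B p q = B q p)
    (horth : ∀ (X : Vec A) (h : A), B (X, (0 : A)) ((0 : Vec A), h) = 0)
    (hnondeg : ∀ p : GVec A, (∀ q : GVec A, B p q = 0) → p = 0)
    (D : GConn A)
    (hkoszul : ∀ p q r : GVec A,
      2 * B (D.conn p q) r =
        p.1 (B q r) + q.1 (B r p) - r.1 (B p q)
          + B (gbracket p q) r - B (gbracket q r) p + B (gbracket r p) q) :
    D.IsGraded := by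
  have hB : IsGradedPairing B := ⟨hadd, hsymm, horth, hnondeg⟩
  refine ⟨fun X Y => ?_, fun X h => ?_, fun h Y => ?_, fun h k => ?_⟩
  · simpa using hB.isHomogeneous_conn D hkoszul (a := 0) (b := 0) (p := (X, 0)) (q := (Y, 0))
      (by simp) (by simp)
  · simpa using hB.isHomogeneous_conn D hkoszul (a := 0) (b := 1) (p := (X, 0)) (q := (0, h))
      (by simp) (by simp)
  · simpa using hB.isHomogeneous_conn D hkoszul (a := 1) (b := 0) (p := (0, h)) (q := (Y, 0))
      (by simp) (by simp)
  · simpa [CharTwo.add_self_eq_zero] using hB.isHomogeneous_conn D hkoszul (a := 1) (b := 1)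
      (p := (0, h)) (q := (0, k)) (by simp) (by simp)

/-- The Levi-Civita connection of a graded metric on `T̂M` — i.e. any
connection satisfying the Koszul formula for a symmetric, `A`-bilinear, nondegenerate
bundle metric `B` for which even vectors are orthogonal to odd vectors — is a graded
connection: `∇̂_X̂ Ŷ` is homogeneous of parity `|X̂| + |Ŷ|` for homogeneous `X̂, Ŷ`. -/
theorem levi_civita_of_graded_metric_is_graded
    {A : Type*} [CommRing A] [Algebra ℝ A]
    (B : GVec A → GVec A → A)
    (hadd : ∀ p q r : GVec A, B (p + q) r = B p r + B q r)
    (hsmul : ∀ (f : A) (p q : GVec A), B (gsmul f p) q = f * B p q)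
    (hsymm : ∀ p q : GVec A, B p q = B q p)
    (horth : ∀ (X : Vec A) (h : A), B (X, (0 : A)) ((0 : Vec A), h) = 0)
    (hnondeg : ∀ p : GVec A, (∀ q : GVec A, B p q = 0) → p = 0)
    (D : GConn A)
    (hkoszul : ∀ p q r : GVec A,
      2 * B (D.conn p q) r =
        p.1 (B q r) + q.1 (B r p) - r.1 (B p q)
          + B (gbracket p q) r - B (gbracket q r) p + B (gbracket r p) q) :
    D.IsGraded :=
  levi_civita_of_graded_metric_is_graded_general B hadd hsymm horth hnondeg D hkoszul
end

section
/- Let \hat{g} = (g, \theta) be the graded metric on \hat{T}M with <X, Y> = g(X, Y) and <\xi, \xi> = e^{2\theta}. Then its Levi-Civita connection is given by \hat{\nabla}_X Y = \nabla_X Y (the Levi-Civita connection of g), \hat{\nabla}_\xi X = \hat{\nabla}_X \xi = d\theta(X)\xi, and \hat{\nabla}_\xi \xi = -e^{2\theta}\nabla\theta, where \nabla\theta is the g-gradient of \theta. -/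
open scoped BigOperators

/-!
We model the algebra of smooth functions `C^∞(M)` abstractly as a commutative `ℝ`-algebra `A`;
vector fields on `M` are the `ℝ`-derivations `Vec A := Derivation ℝ A A`.  A semi-Riemannian
metric together with its Levi-Civita connection is encoded by the structure `SRData`
(symmetric nondegenerate-in-use `A`-bilinear form, plus a torsion-free metric-compatible
connection).  Traces are taken with respect to a (local) orthonormal frame `OrthoFrame`.
-/

variable (A : Type*) [CommRing A] [Algebra ℝ A]

variable {A}

/-!
The graded tangent bundle `T̂M = TM ⊕ ℝ`: its sections `𝔛̂(M) = 𝔛(M) ⊕ C^∞(M)ξ` are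
encoded as pairs `(X, h)` representing `X + hξ`, with even part `(X, 0)` and odd part
`(0, h)`.  The Lie algebroid structure has anchor `ρ(X + hξ) = X` and brackets
`[X, hξ] = X(h)ξ`, `[fξ, gξ] = 0`.
-/

variable (A)

variable {A}

variable (A)

variable {A}

/-! Since `ĝ` is nondegenerate and `2` is invertible, the Koszul formula determines `∇̂`, so it
suffices to check that each claimed value satisfies it.  For `∇̂_X Y` this is the Koszul formula
of `g`; in the other three cases the only inputs are `X(e^{2θ}) = 2 X(θ) e^{2θ}` and, for
`∇̂_ξ ξ`, `g(∇θ, X) = X(θ)`. -/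

section GradedLeviCivita

variable {A : Type*} [CommRing A] [Algebra ℝ A]

lemma eq_of_two_mul_eq_two_mul {x y : A} (h : 2 * x = 2 * y) : x = y := by
  have hunit : IsUnit (2 : A) := by
    simpa only [map_ofNat] using (IsUnit.mk0 (2 : ℝ) two_ne_zero).map (algebraMap ℝ A)
  exact hunit.mul_left_cancel h

namespace SRData

variable (S : SRData A)

lemma g_zero_left (Z : Vec A) : S.g 0 Z = 0 := by
  simpa using S.g_smul_left 0 0 Z

lemma g_zero_right (Z : Vec A) : S.g Z 0 = 0 := by
  rw [S.g_symm, g_zero_left]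

lemma g_sub_left (X Y Z : Vec A) : S.g (X - Y) Z = S.g X Z - S.g Y Z := by
  rw [eq_sub_iff_add_eq, ← S.g_add_left, sub_add_cancel]

lemma g_neg_left (X Z : Vec A) : S.g (-X) Z = -S.g X Z := by
  rw [← zero_sub, g_sub_left, g_zero_left, zero_sub]

theorem koszul (X Y Z : Vec A) :
    2 * S.g (S.conn X Y) Z =
      X (S.g Y Z) + Y (S.g Z X) - Z (S.g X Y)
        + S.g ⁅X, Y⁆ Z - S.g ⁅Y, Z⁆ X + S.g ⁅Z, X⁆ Y := by
  rw [← S.torsion_free X Y, ← S.torsion_free Y Z, ← S.torsion_free Z X,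
    g_sub_left, g_sub_left, g_sub_left]
  linear_combination -S.metric_compat X Y Z - S.metric_compat Y Z X + S.metric_compat Z X Y
    - S.g_symm Y (S.conn X Z) - S.g_symm Z (S.conn Y X) + S.g_symm X (S.conn Z Y)

end SRData

def koszulForm (S : SRData A) (Eexp : A) (p q r : GVec A) : A :=
  p.1 (gmetric S Eexp q r) + q.1 (gmetric S Eexp r p) - r.1 (gmetric S Eexp p q)
    + gmetric S Eexp (gbracket p q) r - gmetric S Eexp (gbracket q r) p
    + gmetric S Eexp (gbracket r p) q

variable (S : SRData A) {θ Eexp : A}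

lemma gmetric_sub_left (p q r : GVec A) :
    gmetric S Eexp (p - q) r = gmetric S Eexp p r - gmetric S Eexp q r := by
  simp only [gmetric, Prod.fst_sub, Prod.snd_sub, S.g_sub_left]
  ring

lemma eq_of_gmetric_eq (hnondeg : ∀ p : GVec A, (∀ q : GVec A, gmetric S Eexp p q = 0) → p = 0)
    {p q : GVec A} (h : ∀ r, gmetric S Eexp p r = gmetric S Eexp q r) : p = q :=
  sub_eq_zero.mp <| hnondeg _ fun r => by rw [gmetric_sub_left, h r, sub_self]

lemma GConn.conn_eq_of_koszulForm (D : GConn A)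
    (hnondeg : ∀ p : GVec A, (∀ q : GVec A, gmetric S Eexp p q = 0) → p = 0)
    (hkoszul : ∀ p q r, 2 * gmetric S Eexp (D.conn p q) r = koszulForm S Eexp p q r)
    {p q c : GVec A} (h : ∀ r, koszulForm S Eexp p q r = 2 * gmetric S Eexp c r) :
    D.conn p q = c :=
  eq_of_gmetric_eq S hnondeg fun r => eq_of_two_mul_eq_two_mul <| (hkoszul p q r).trans (h r)

lemma koszulForm_even_even (X Y : Vec A) (r : GVec A) :
    koszulForm S Eexp (X, 0) (Y, 0) r = 2 * gmetric S Eexp (S.conn X Y, 0) r := by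
  obtain ⟨Z, k⟩ := r
  simp only [koszulForm, gmetric, gbracket, mul_zero, zero_mul, add_zero, map_zero, sub_zero]
  linear_combination -S.koszul X Y Z

lemma derivation_apply_mul_eexp (hEexp : ∀ X : Vec A, X Eexp = 2 * X θ * Eexp) (X : Vec A) (k : A) :
    X (k * Eexp) = (X k + 2 * k * X θ) * Eexp := by
  rw [Derivation.leibniz, hEexp, smul_eq_mul, smul_eq_mul]
  ring

lemma koszulForm_odd_even (hEexp : ∀ X : Vec A, X Eexp = 2 * X θ * Eexp) (X : Vec A)
    (r : GVec A) :
    koszulForm S Eexp (0, 1) (X, 0) r = 2 * gmetric S Eexp (0, X θ) r := by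
  obtain ⟨Z, k⟩ := r
  simp only [koszulForm, gmetric, gbracket, S.g_zero_left, S.g_zero_right, mul_zero, zero_mul,
    mul_one, add_zero, zero_add, map_zero, Derivation.map_one_eq_zero, lie_zero, zero_lie,
    sub_zero, Derivation.zero_apply, derivation_apply_mul_eexp hEexp]
  ring

lemma koszulForm_even_odd (hEexp : ∀ X : Vec A, X Eexp = 2 * X θ * Eexp) (X : Vec A)
    (r : GVec A) :
    koszulForm S Eexp (X, 0) (0, 1) r = 2 * gmetric S Eexp (0, X θ) r := by
  obtain ⟨Z, k⟩ := r
  simp only [koszulForm, gmetric, gbracket, S.g_zero_left, S.g_zero_right, mul_zero, zero_mul,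
    one_mul, mul_one, add_zero, zero_add, map_zero, Derivation.map_one_eq_zero, lie_zero, zero_lie,
    sub_zero, Derivation.zero_apply, derivation_apply_mul_eexp hEexp]
  ring

lemma koszulForm_odd_odd (hEexp : ∀ X : Vec A, X Eexp = 2 * X θ * Eexp) {G : Vec A}
    (hG : ∀ X : Vec A, S.g G X = X θ) (r : GVec A) :
    koszulForm S Eexp (0, 1) (0, 1) r = 2 * gmetric S Eexp (-(Eexp • G), 0) r := by
  obtain ⟨Z, k⟩ := r
  simp only [koszulForm, gmetric, gbracket, S.g_zero_left, S.g_zero_right, S.g_neg_left,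
    S.g_smul_left, hG, hEexp, zero_mul, one_mul, mul_one, add_zero, zero_add,
    Derivation.map_one_eq_zero, lie_zero, zero_lie, sub_zero, zero_sub, sub_self,
    Derivation.zero_apply]
  ring

end GradedLeviCivita

theorem graded_levi_civita_connection_general
    {A : Type*} [CommRing A] [Algebra ℝ A] (S : SRData A) (θ Eexp : A)
    (hEexp : ∀ X : Vec A, X Eexp = 2 * X θ * Eexp)
    (hnondeg : ∀ p : GVec A, (∀ q : GVec A, gmetric S Eexp p q = 0) → p = 0)
    (G : Vec A) (hG : ∀ X : Vec A, S.g G X = X θ)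
    (D : GConn A)
    (hkoszul : ∀ p q r : GVec A,
      2 * gmetric S Eexp (D.conn p q) r =
        p.1 (gmetric S Eexp q r) + q.1 (gmetric S Eexp r p) - r.1 (gmetric S Eexp p q)
          + gmetric S Eexp (gbracket p q) r - gmetric S Eexp (gbracket q r) p
          + gmetric S Eexp (gbracket r p) q) :
    (∀ X Y : Vec A, D.conn (X, (0 : A)) (Y, (0 : A)) = (S.conn X Y, 0)) ∧
    (∀ X : Vec A, D.conn ((0 : Vec A), (1 : A)) (X, (0 : A)) = (0, X θ)) ∧
    (∀ X : Vec A, D.conn (X, (0 : A)) ((0 : Vec A), (1 : A)) = (0, X θ)) ∧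
    D.conn ((0 : Vec A), (1 : A)) ((0 : Vec A), (1 : A)) = (-(Eexp • G), 0) := by
  have conn_eq : ∀ {p q c : GVec A},
      (∀ r, koszulForm S Eexp p q r = 2 * gmetric S Eexp c r) → D.conn p q = c :=
    D.conn_eq_of_koszulForm S hnondeg hkoszul
  exact ⟨fun X Y => conn_eq (koszulForm_even_even S X Y),
    fun X => conn_eq (koszulForm_odd_even S hEexp X),
    fun X => conn_eq (koszulForm_even_odd S hEexp X),
    conn_eq (koszulForm_odd_odd S hEexp hG)⟩

/-- Let `ĝ = (g, θ)` be the graded metric on `T̂M` with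
`⟨X, Y⟩ = g(X, Y)` and `⟨ξ, ξ⟩ = e^{2θ}` (the element `Eexp` plays the role of `e^{2θ}`:
it is a unit satisfying `X(e^{2θ}) = 2 X(θ) e^{2θ}`).  Then its Levi-Civita connection
(the connection satisfying the Koszul formula) is given by `∇̂_X Y = ∇_X Y` (the
Levi-Civita connection of `g`), `∇̂_ξ X = ∇̂_X ξ = dθ(X) ξ`, and
`∇̂_ξ ξ = -e^{2θ} ∇θ`, where `∇θ` is the `g`-gradient of `θ`. -/
theorem graded_levi_civita_connection
    {A : Type*} [CommRing A] [Algebra ℝ A] (S : SRData A) (θ Eexp : A)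
    (hEunit : IsUnit Eexp)
    (hEexp : ∀ X : Vec A, X Eexp = 2 * X θ * Eexp)
    (hnondeg : ∀ p : GVec A, (∀ q : GVec A, gmetric S Eexp p q = 0) → p = 0)
    (G : Vec A) (hG : ∀ X : Vec A, S.g G X = X θ)
    (D : GConn A)
    (hkoszul : ∀ p q r : GVec A,
      2 * gmetric S Eexp (D.conn p q) r =
        p.1 (gmetric S Eexp q r) + q.1 (gmetric S Eexp r p) - r.1 (gmetric S Eexp p q)
          + gmetric S Eexp (gbracket p q) r - gmetric S Eexp (gbracket q r) p
          + gmetric S Eexp (gbracket r p) q) :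
    (∀ X Y : Vec A, D.conn (X, (0 : A)) (Y, (0 : A)) = (S.conn X Y, 0)) ∧
    (∀ X : Vec A, D.conn ((0 : Vec A), (1 : A)) (X, (0 : A)) = (0, X θ)) ∧
    (∀ X : Vec A, D.conn (X, (0 : A)) ((0 : Vec A), (1 : A)) = (0, X θ)) ∧
    D.conn ((0 : Vec A), (1 : A)) ((0 : Vec A), (1 : A)) = (-(Eexp • G), 0) :=
  graded_levi_civita_connection_general S θ Eexp hEexp hnondeg G hG D hkoszul
end

section
/- For the Levi-Civita connection \hat{\nabla} of the graded metric \hat{g} = (g, \theta), the curvature tensor \hat{R} satisfies: \hat{R}(X,Y)(Z) = R(X,Y)(Z) (the curvature of g), \hat{R}(X,Y)(\xi) = 0, \hat{R}(X,\xi)(Y) = ((\nabla_X d\theta)(Y) + d\theta(X)d\theta(Y))\xi, and \hat{R}(X,\xi)(\xi) = \nabla_X X_0 - d\theta(X) X_0 where X_0 = -e^{2\theta}\nabla\theta. -/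
open scoped BigOperators

/-!
We model the algebra of smooth functions `C^∞(M)` abstractly as a commutative `ℝ`-algebra `A`;
vector fields on `M` are the `ℝ`-derivations `Vec A := Derivation ℝ A A`.  A semi-Riemannian
metric together with its Levi-Civita connection is encoded by the structure `SRData`
(symmetric nondegenerate-in-use `A`-bilinear form, plus a torsion-free metric-compatible
connection).  Traces are taken with respect to a (local) orthonormal frame `OrthoFrame`.
-/

variable (A : Type*) [CommRing A] [Algebra ℝ A]

variable {A}

/-!
The graded tangent bundle `T̂M = TM ⊕ ℝ`: its sections `𝔛̂(M) = 𝔛(M) ⊕ C^∞(M)ξ` are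
encoded as pairs `(X, h)` representing `X + hξ`, with even part `(X, 0)` and odd part
`(0, h)`.  The Lie algebroid structure has anchor `ρ(X + hξ) = X` and brackets
`[X, hξ] = X(h)ξ`, `[fξ, gξ] = 0`.
-/

variable (A)

variable {A}

variable (A)

variable {A}

/-!
On homogeneous sections `∇̂` is given by four explicit formulas, so each component of `R̂` is a
direct computation. On even sections `∇̂` is `∇`. Along even directions `∇̂` acts on the odd
line `C^∞(M)ξ` as `d + dθ`, which is flat because `d(dθ) = 0`. In the mixed components the
bracket `[X, ξ]` vanishes, and what survives is `(∇_X dθ)(Y) + dθ(X) dθ(Y)` and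
`∇_X X₀ - dθ(X) X₀` respectively.
-/

section GradedCurvature

variable {A : Type*} [CommRing A] [Algebra ℝ A]

@[simp]
lemma gbracket_even_even (X Y : Vec A) : gbracket (X, (0 : A)) (Y, (0 : A)) = (⁅X, Y⁆, 0) := by
  simp [gbracket]

@[simp]
lemma gbracket_even_xi (X : Vec A) : gbracket (X, (0 : A)) ((0 : Vec A), (1 : A)) = 0 := by
  simp [gbracket]

lemma GConn.conn_zero_left (D : GConn A) (q : GVec A) : D.conn 0 q = 0 := by
  have h := D.smul_left 0 0 q
  simp only [gsmul, zero_smul, zero_mul] at h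
  exact h

variable (S : SRData A) (D : GConn A) (θ : A)

lemma GConn.curv_even_even_even
    (h1 : ∀ X Y : Vec A, D.conn (X, (0 : A)) (Y, (0 : A)) = (S.conn X Y, 0)) (X Y Z : Vec A) :
    D.curv (X, (0 : A)) (Y, (0 : A)) (Z, (0 : A)) = (S.curv X Y Z, 0) := by
  simp [GConn.curv, h1, SRData.curv]

lemma GConn.curv_even_even_odd
    (h2 : ∀ (X : Vec A) (h : A), D.conn (X, (0 : A)) ((0 : Vec A), h) = (0, h * X θ + X h))
    (X Y : Vec A) (h : A) : D.curv (X, (0 : A)) (Y, (0 : A)) ((0 : Vec A), h) = 0 := by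
  ext
  · simp [GConn.curv, h2]
  · simp [GConn.curv, h2, Derivation.commutator_apply]
    ring

lemma GConn.curv_even_xi_even
    (h1 : ∀ X Y : Vec A, D.conn (X, (0 : A)) (Y, (0 : A)) = (S.conn X Y, 0))
    (h2 : ∀ (X : Vec A) (h : A), D.conn (X, (0 : A)) ((0 : Vec A), h) = (0, h * X θ + X h))
    (h3 : ∀ (h : A) (X : Vec A), D.conn ((0 : Vec A), h) (X, (0 : A)) = (0, h * X θ))
    (X Y : Vec A) :
    D.curv (X, (0 : A)) ((0 : Vec A), (1 : A)) (Y, (0 : A)) = (0, S.hess θ X Y + X θ * Y θ) := by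
  simp [GConn.curv, h1, h2, h3, GConn.conn_zero_left, SRData.hess]
  ring

lemma GConn.curv_even_xi_xi (V : Vec A)
    (h1 : ∀ X Y : Vec A, D.conn (X, (0 : A)) (Y, (0 : A)) = (S.conn X Y, 0))
    (h2 : ∀ (X : Vec A) (h : A), D.conn (X, (0 : A)) ((0 : Vec A), h) = (0, h * X θ + X h))
    (h4 : ∀ h k : A, D.conn ((0 : Vec A), h) ((0 : Vec A), k) = ((h * k) • V, 0)) (X : Vec A) :
    D.curv (X, (0 : A)) ((0 : Vec A), (1 : A)) ((0 : Vec A), (1 : A))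
      = (S.conn X V - X θ • V, 0) := by
  simp [GConn.curv, h1, h2, h4, GConn.conn_zero_left]

end GradedCurvature

theorem graded_curvature_formulas_general
    {A : Type*} [CommRing A] [Algebra ℝ A] (S : SRData A) (θ Eexp : A)
    (G : Vec A)
    (D : GConn A)
    (h1 : ∀ X Y : Vec A, D.conn (X, (0 : A)) (Y, (0 : A)) = (S.conn X Y, 0))
    (h2 : ∀ (X : Vec A) (h : A),
      D.conn (X, (0 : A)) ((0 : Vec A), h) = (0, h * X θ + X h))
    (h3 : ∀ (h : A) (X : Vec A), D.conn ((0 : Vec A), h) (X, (0 : A)) = (0, h * X θ))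
    (h4 : ∀ h k : A,
      D.conn ((0 : Vec A), h) ((0 : Vec A), k) = ((h * k) • (-(Eexp • G)), 0)) :
    (∀ X Y Z : Vec A,
      D.curv (X, (0 : A)) (Y, (0 : A)) (Z, (0 : A)) = (S.curv X Y Z, 0)) ∧
    (∀ X Y : Vec A,
      D.curv (X, (0 : A)) (Y, (0 : A)) ((0 : Vec A), (1 : A)) = 0) ∧
    (∀ X Y : Vec A,
      D.curv (X, (0 : A)) ((0 : Vec A), (1 : A)) (Y, (0 : A))
        = (0, S.hess θ X Y + X θ * Y θ)) ∧
    (∀ X : Vec A,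
      D.curv (X, (0 : A)) ((0 : Vec A), (1 : A)) ((0 : Vec A), (1 : A))
        = (S.conn X (-(Eexp • G)) - X θ • (-(Eexp • G)), 0)) :=
  ⟨D.curv_even_even_even S h1, fun X Y => D.curv_even_even_odd θ h2 X Y 1,
    D.curv_even_xi_even S θ h1 h2 h3, D.curv_even_xi_xi S θ _ h1 h2 h4⟩

/-- For the Levi-Civita connection `∇̂` of the graded metric
`ĝ = (g, θ)` (given explicitly by `∇̂_X Y = ∇_X Y`, `∇̂_ξ X = ∇̂_X ξ = dθ(X)ξ`,
`∇̂_ξ ξ = -e^{2θ}∇θ`), the curvature tensor `R̂` satisfies: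
`R̂(X,Y)Z = R(X,Y)Z`, `R̂(X,Y)ξ = 0`,
`R̂(X,ξ)Y = ((∇_X dθ)(Y) + dθ(X)dθ(Y))ξ`, and
`R̂(X,ξ)ξ = ∇_X X₀ - dθ(X) X₀` where `X₀ = -e^{2θ}∇θ`. -/
theorem graded_curvature_formulas
    {A : Type*} [CommRing A] [Algebra ℝ A] (S : SRData A) (θ Eexp : A)
    (G : Vec A) (hG : ∀ X : Vec A, S.g G X = X θ)
    (D : GConn A)
    (h1 : ∀ X Y : Vec A, D.conn (X, (0 : A)) (Y, (0 : A)) = (S.conn X Y, 0))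
    (h2 : ∀ (X : Vec A) (h : A),
      D.conn (X, (0 : A)) ((0 : Vec A), h) = (0, h * X θ + X h))
    (h3 : ∀ (h : A) (X : Vec A), D.conn ((0 : Vec A), h) (X, (0 : A)) = (0, h * X θ))
    (h4 : ∀ h k : A,
      D.conn ((0 : Vec A), h) ((0 : Vec A), k) = ((h * k) • (-(Eexp • G)), 0)) :
    (∀ X Y Z : Vec A,
      D.curv (X, (0 : A)) (Y, (0 : A)) (Z, (0 : A)) = (S.curv X Y Z, 0)) ∧
    (∀ X Y : Vec A,
      D.curv (X, (0 : A)) (Y, (0 : A)) ((0 : Vec A), (1 : A)) = 0) ∧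
    (∀ X Y : Vec A,
      D.curv (X, (0 : A)) ((0 : Vec A), (1 : A)) (Y, (0 : A))
        = (0, S.hess θ X Y + X θ * Y θ)) ∧
    (∀ X : Vec A,
      D.curv (X, (0 : A)) ((0 : Vec A), (1 : A)) ((0 : Vec A), (1 : A))
        = (S.conn X (-(Eexp • G)) - X θ • (-(Eexp • G)), 0)) :=
  graded_curvature_formulas_general S θ Eexp G D h1 h2 h3 h4
end

section
/- If \theta is a smooth function on a semi-Riemannian manifold (M, g) with \Delta\theta = 0, then the symmetric 2-tensor 2 d\theta \otimes d\theta - |\nabla\theta|^2 g is divergence free. -/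
open scoped BigOperators

/-!
We model the algebra of smooth functions `C^∞(M)` abstractly as a commutative `ℝ`-algebra `A`;
vector fields on `M` are the `ℝ`-derivations `Vec A := Derivation ℝ A A`.  A semi-Riemannian
metric together with its Levi-Civita connection is encoded by the structure `SRData`
(symmetric nondegenerate-in-use `A`-bilinear form, plus a torsion-free metric-compatible
connection).  Traces are taken with respect to a (local) orthonormal frame `OrthoFrame`.
-/

variable (A : Type*) [CommRing A] [Algebra ℝ A]

variable {A}

/-!
Writing `T = 2 dθ ⊗ dθ - |∇θ|² g`, the product rule and `∇g = 0` give
`div(dθ ⊗ dθ)(X) = Δθ · Xθ + Hes(θ)(∇θ, X)` and `div(|∇θ|² g)(X) = X|∇θ|² = 2 Hes(θ)(∇θ, X)`,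
so `div T = 2 Δθ dθ`, which vanishes when `θ` is harmonic.
-/

def Derivation.evalₗ {R A M : Type*} [CommSemiring R] [CommSemiring A] [AddCommMonoid M]
    [Algebra R A] [Module A M] [Module R M] [SMulCommClass R A M] (a : A) :
    Derivation R A M →ₗ[A] M where
  toFun D := D a
  map_add' _ _ := rfl
  map_smul' _ _ := rfl

namespace SRData

variable (S : SRData A)

def IsGradient (θ : A) (G : Vec A) : Prop := ∀ X : Vec A, S.g G X = X θ

def hessₗ (f : A) (Y : Vec A) : Vec A →ₗ[A] A where
  toFun X := S.hess f X Y
  map_add' X Z := by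
    simp only [hess, S.conn_add_left, Derivation.add_apply]
    ring
  map_smul' r X := by
    simp only [hess, S.conn_smul_left, Derivation.smul_apply, smul_eq_mul, RingHom.id_apply]
    ring

theorem hess_comm (f : A) (X Y : Vec A) : S.hess f X Y = S.hess f Y X := by
  have h := congrArg (fun D : Vec A => D f) (S.torsion_free X Y)
  simp only [Derivation.sub_apply, Derivation.commutator_apply] at h
  simp only [hess]
  linear_combination -h

variable {S}

theorem IsGradient.g_conn {θ : A} {G : Vec A} (hG : S.IsGradient θ G) (X Y : Vec A) :
    S.g (S.conn X G) Y = S.hess θ X Y := by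
  have h := S.metric_compat X G Y
  rw [hG, hG] at h
  simp only [hess]
  linear_combination -h

theorem IsGradient.apply_g_self {θ : A} {G : Vec A} (hG : S.IsGradient θ G) (X : Vec A) :
    X (S.g G G) = 2 * S.hess θ G X := by
  rw [S.metric_compat, S.g_symm G, hG.g_conn, S.hess_comm]
  ring

end SRData

namespace OrthoFrame

variable {S : SRData A} {n : ℕ} (F : OrthoFrame S n)

theorem map_eq_sum (φ : Vec A →ₗ[A] A) (X : Vec A) :
    φ X = ∑ i, F.eps i * S.g X (F.E i) * φ (F.E i) := by
  conv_lhs => rw [F.expand X]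
  simp only [map_sum, map_smul, smul_eq_mul]

theorem apply_eq_sum (X : Vec A) (f : A) : X f = ∑ i, F.eps i * S.g X (F.E i) * F.E i f :=
  F.map_eq_sum (Derivation.evalₗ f) X

end OrthoFrame

namespace SRData

variable {S : SRData A} {n : ℕ} (F : OrthoFrame S n)

theorem div2_sub (T₁ T₂ : Vec A → Vec A → A) (X : Vec A) :
    S.div2 F (fun Y Z => T₁ Y Z - T₂ Y Z) X = S.div2 F T₁ X - S.div2 F T₂ X := by
  simp only [div2, map_sub, ← Finset.sum_sub_distrib]
  exact Finset.sum_congr rfl fun i _ => by ring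

theorem div2_natCast_mul (k : ℕ) (T : Vec A → Vec A → A) (X : Vec A) :
    S.div2 F (fun Y Z => k * T Y Z) X = k * S.div2 F T X := by
  simp only [div2, Derivation.leibniz, Derivation.map_natCast, smul_eq_mul, Finset.mul_sum]
  exact Finset.sum_congr rfl fun i _ => by ring

theorem div2_mul_g (f : A) (X : Vec A) :
    S.div2 F (fun Y Z => f * S.g Y Z) X = X f := by
  rw [F.apply_eq_sum X f, div2]
  refine Finset.sum_congr rfl fun i _ => ?_
  rw [Derivation.leibniz, S.metric_compat, S.g_symm X, smul_eq_mul, smul_eq_mul]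
  ring

theorem div2_mul_self_apply {θ : A} {G : Vec A} (hG : S.IsGradient θ G) (X : Vec A) :
    S.div2 F (fun Y Z => Y θ * Z θ) X = S.lap F θ * X θ + S.hess θ G X := by
  have hgrad : S.hess θ G X = ∑ i, F.eps i * F.E i θ * S.hess θ (F.E i) X := by
    simp only [← hG _]
    exact F.map_eq_sum (S.hessₗ θ X) G
  rw [hgrad, lap, Finset.sum_mul, ← Finset.sum_add_distrib, div2]
  refine Finset.sum_congr rfl fun i _ => ?_
  rw [Derivation.leibniz, smul_eq_mul, smul_eq_mul, hess, hess]
  ring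

theorem div2_stress_energy {θ : A} {G : Vec A} (hG : S.IsGradient θ G) (X : Vec A) :
    S.div2 F (fun Y Z => 2 * (Y θ * Z θ) - S.g G G * S.g Y Z) X = 2 * S.lap F θ * X θ := by
  rw [div2_sub, ← Nat.cast_ofNat, div2_natCast_mul, div2_mul_self_apply F hG, div2_mul_g,
    hG.apply_g_self]
  push_cast
  ring

end SRData

/-- If `θ` is a smooth function on a semi-Riemannian manifold `(M, g)`
with `Δθ = 0`, then the symmetric 2-tensor `2 dθ ⊗ dθ - |∇θ|² g` is divergence free.
Here `∇θ` is the gradient (`g(∇θ, X) = X(θ)`) and `|∇θ|² = g(∇θ, ∇θ)`. -/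
theorem stress_energy_tensor_divergence_free
    {A : Type*} [CommRing A] [Algebra ℝ A] (S : SRData A) {n : ℕ} (F : OrthoFrame S n)
    (θ : A) (G : Vec A) (hG : ∀ X : Vec A, S.g G X = X θ)
    (hharmonic : S.lap F θ = 0) :
    ∀ X : Vec A,
      S.div2 F (fun Y Z => 2 * (Y θ * Z θ) - S.g G G * S.g Y Z) X = 0 := by
  intro X
  rw [SRData.div2_stress_energy F hG, hharmonic, mul_zero, zero_mul]
end

section
/- For the graded metric \hat{g} = (g,\theta) on \hat{T}M, the graded Hessian of a smooth function f satisfies \widehat{Hes}(f)(X,Y) = Hes(f)(X,Y), \widehat{Hes}(f)(\xi, X) = 0, and \widehat{Hes}(f)(\xi,\xi) = e^{2\theta}<\nabla f, \nabla\theta>; consequently tr(\widehat{Hes}(f)) = \Delta f + <\nabla f, \nabla\theta>. -/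
open scoped BigOperators

/-!
We model the algebra of smooth functions `C^∞(M)` abstractly as a commutative `ℝ`-algebra `A`;
vector fields on `M` are the `ℝ`-derivations `Vec A := Derivation ℝ A A`.  A semi-Riemannian
metric together with its Levi-Civita connection is encoded by the structure `SRData`
(symmetric nondegenerate-in-use `A`-bilinear form, plus a torsion-free metric-compatible
connection).  Traces are taken with respect to a (local) orthonormal frame `OrthoFrame`.
-/

variable (A : Type*) [CommRing A] [Algebra ℝ A]

variable {A}

/-!
The graded tangent bundle `T̂M = TM ⊕ ℝ`: its sections `𝔛̂(M) = 𝔛(M) ⊕ C^∞(M)ξ` are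
encoded as pairs `(X, h)` representing `X + hξ`, with even part `(X, 0)` and odd part
`(0, h)`.  The Lie algebroid structure has anchor `ρ(X + hξ) = X` and brackets
`[X, hξ] = X(h)ξ`, `[fξ, gξ] = 0`.
-/

variable (A)

variable {A}

variable (A)

variable {A}

/-!
Since `d̂f(X + hξ) = X(f)` only reads the anchor component, the graded Hessian only sees the
`Vec`-components of `∇̂`: these are `∇_X Y` on even pairs, `0` on `(ξ, X)`, and
`-e^{2θ}∇θ` on `(ξ, ξ)`, the last giving `e^{2θ}⟨∇f, ∇θ⟩`. In the trace the `ξ`-term is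
weighted by `ĝ(ξ, ξ)⁻¹ = e^{-2θ}`, which leaves `⟨∇f, ∇θ⟩` next to `Δf`.
-/

section GradedHessian

variable {A : Type*} [CommRing A] [Algebra ℝ A] (D : GConn A) (f : A)

theorem ghess_even_of_conn_even {S : SRData A}
    (hD : ∀ X Y : Vec A, D.conn (X, (0 : A)) (Y, (0 : A)) = (S.conn X Y, 0)) (X Y : Vec A) :
    ghess D f (X, (0 : A)) (Y, (0 : A)) = S.hess f X Y := by
  simp [ghess, SRData.hess, hD]

theorem ghess_odd_left (h : A) (q : GVec A) :
    ghess D f ((0 : Vec A), h) q = -(D.conn ((0 : Vec A), h) q).1 f := by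
  simp [ghess]

theorem sum_ghess_frame_eq_lap {S : SRData A} {n : ℕ} (F : OrthoFrame S n)
    (hD : ∀ X Y : Vec A, D.conn (X, (0 : A)) (Y, (0 : A)) = (S.conn X Y, 0)) :
    ∑ i, F.eps i * ghess D f (F.E i, (0 : A)) (F.E i, (0 : A)) = S.lap F f := by
  simp only [SRData.lap, ghess_even_of_conn_even D f hD]

end GradedHessian

theorem graded_hessian_formulas_general
    {A : Type*} [CommRing A] [Algebra ℝ A] (S : SRData A) {n : ℕ} (F : OrthoFrame S n)
    (θ Eexp Einv : A) (hEinv : Eexp * Einv = 1)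
    (G : Vec A)
    (f : A) (Gf : Vec A) (hGf : ∀ X : Vec A, S.g Gf X = X f)
    (D : GConn A)
    (h1 : ∀ X Y : Vec A, D.conn (X, (0 : A)) (Y, (0 : A)) = (S.conn X Y, 0))
    (h3 : ∀ (h : A) (X : Vec A), D.conn ((0 : Vec A), h) (X, (0 : A)) = (0, h * X θ))
    (h4 : ∀ h k : A,
      D.conn ((0 : Vec A), h) ((0 : Vec A), k) = ((h * k) • (-(Eexp • G)), 0)) :
    (∀ X Y : Vec A, ghess D f (X, (0 : A)) (Y, (0 : A)) = S.hess f X Y) ∧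
    (∀ X : Vec A, ghess D f ((0 : Vec A), (1 : A)) (X, (0 : A)) = 0) ∧
    (ghess D f ((0 : Vec A), (1 : A)) ((0 : Vec A), (1 : A)) = Eexp * S.g Gf G) ∧
    ((∑ i, F.eps i * ghess D f (F.E i, (0 : A)) (F.E i, (0 : A)))
        + Einv * ghess D f ((0 : Vec A), (1 : A)) ((0 : Vec A), (1 : A))
      = S.lap F f + S.g Gf G) := by
  have hξξ : ghess D f ((0 : Vec A), (1 : A)) ((0 : Vec A), (1 : A)) = Eexp * S.g Gf G := by
    rw [ghess_odd_left, h4, hGf]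
    simp
  refine ⟨ghess_even_of_conn_even D f h1, fun X => ?_, hξξ, ?_⟩
  · simp [ghess_odd_left, h3]
  · rw [sum_ghess_frame_eq_lap D f F h1, hξξ, ← mul_assoc, mul_comm Einv, hEinv, one_mul]

/-- For the graded metric `ĝ = (g, θ)` on `T̂M` with Levi-Civita
connection `∇̂`, the graded Hessian of a smooth function `f` satisfies
`Ĥes(f)(X, Y) = Hes(f)(X, Y)`, `Ĥes(f)(ξ, X) = 0`, and
`Ĥes(f)(ξ, ξ) = e^{2θ}⟨∇f, ∇θ⟩`; consequently
`tr(Ĥes(f)) = Δf + ⟨∇f, ∇θ⟩` (trace over the frame `{E₁, …, E_n, e^{-θ}ξ}`). -/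
theorem graded_hessian_formulas
    {A : Type*} [CommRing A] [Algebra ℝ A] (S : SRData A) {n : ℕ} (F : OrthoFrame S n)
    (θ Eexp Einv : A) (hEinv : Eexp * Einv = 1)
    (G : Vec A) (hG : ∀ X : Vec A, S.g G X = X θ)
    (f : A) (Gf : Vec A) (hGf : ∀ X : Vec A, S.g Gf X = X f)
    (D : GConn A)
    (h1 : ∀ X Y : Vec A, D.conn (X, (0 : A)) (Y, (0 : A)) = (S.conn X Y, 0))
    (h2 : ∀ (X : Vec A) (h : A),
      D.conn (X, (0 : A)) ((0 : Vec A), h) = (0, h * X θ + X h))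
    (h3 : ∀ (h : A) (X : Vec A), D.conn ((0 : Vec A), h) (X, (0 : A)) = (0, h * X θ))
    (h4 : ∀ h k : A,
      D.conn ((0 : Vec A), h) ((0 : Vec A), k) = ((h * k) • (-(Eexp • G)), 0)) :
    (∀ X Y : Vec A, ghess D f (X, (0 : A)) (Y, (0 : A)) = S.hess f X Y) ∧
    (∀ X : Vec A, ghess D f ((0 : Vec A), (1 : A)) (X, (0 : A)) = 0) ∧
    (ghess D f ((0 : Vec A), (1 : A)) ((0 : Vec A), (1 : A)) = Eexp * S.g Gf G) ∧
    ((∑ i, F.eps i * ghess D f (F.E i, (0 : A)) (F.E i, (0 : A)))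
        + Einv * ghess D f ((0 : Vec A), (1 : A)) ((0 : Vec A), (1 : A))
      = S.lap F f + S.g Gf G) :=
  graded_hessian_formulas_general S F θ Eexp Einv hEinv G f Gf hGf D h1 h3 h4
end
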